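/- Let μ ∈ ℝ and σ_1, σ_2 ≥ 0, and let X and Y be independent random variables with X Gaussian with mean μ and variance σ_1² and Y Gaussian with mean μ and variance σ_2². Then E[max(X, Y)] = μ + √((σ_1² + σ_2²)/(2π)). -/

import Mathlib

/-!
Since `max x y = (x + y + |x - y|) / 2`, it suffices to know `E[X] = E[Y] = μ` and `E|X - Y|`.
By independence `X - Y` is a centred Gaussian `Z` of variance `v = σ₁² + σ₂²`, and
`E|Z| = 2 (2πv)^{-1/2} ∫₀^∞ x e^{-x²/2v} dx = √(2v/π)`.
-/

open MeasureTheory ProbabilityTheory Real Set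
open scoped NNReal

theorem integral_mul_exp_neg_mul_sq_Ioi {b : ℝ} (hb : 0 < b) :
    ∫ r in Ioi (0 : ℝ), r * exp (-b * r ^ 2) = (2 * b)⁻¹ := by
  have h := integral_mul_cexp_neg_mul_sq (b := (b : ℂ)) (by simpa using hb)
  have : ((∫ r in Ioi (0 : ℝ), r * exp (-b * r ^ 2) : ℝ) : ℂ) = ((2 * b)⁻¹ : ℝ) := by
    rw [← integral_complex_ofReal]; push_cast; exact h
  exact_mod_cast this

theorem integral_abs_gaussianReal_zero (v : ℝ≥0) :
    ∫ x, |x| ∂gaussianReal 0 v = √(2 * v / π) := by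
  rcases eq_or_ne v 0 with rfl | hv
  · simp
  have hpdf (x : ℝ) : gaussianPDFReal 0 v x * |x|
      = (√(2 * π * v))⁻¹ * (|x| * exp (-(2 * (v : ℝ))⁻¹ * |x| ^ 2)) := by
    rw [gaussianPDFReal, sq_abs, sub_zero]; ring_nf
  simp_rw [integral_gaussianReal_eq_integral_smul hv, smul_eq_mul, hpdf]
  rw [integral_comp_abs (f := fun y ↦ (√(2 * π * v))⁻¹ * (y * exp (-(2 * (v : ℝ))⁻¹ * y ^ 2))),
    integral_const_mul, integral_mul_exp_neg_mul_sq_Ioi (by positivity),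
    show 2 * (v : ℝ) / π = (2 * v) ^ 2 / (2 * π * v) by field_simp,
    sqrt_div' _ (by positivity), sqrt_sq (by positivity)]
  field_simp

lemma max_eq_add_add_abs_sub_div_two {α : Type*} [Field α] [LinearOrder α] [IsStrictOrderedRing α]
    (a b : α) : max a b = (a + b + |a - b|) / 2 := by
  linarith [max_sub_min_eq_abs' a b, min_add_max a b]

namespace ProbabilityTheory

variable {Ω : Type*} {mΩ : MeasurableSpace Ω} {P : Measure Ω}

lemma HasLaw.of_map_eq {𝓧 : Type*} {m𝓧 : MeasurableSpace 𝓧} {μ : Measure 𝓧} [NeZero μ]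
    {X : Ω → 𝓧} (h : P.map X = μ) : HasLaw X μ P :=
  ⟨AEMeasurable.of_map_ne_zero (h ▸ NeZero.ne μ), h⟩

variable {X Y : Ω → ℝ} {μ μ₁ μ₂ : ℝ} {v v₁ v₂ : ℝ≥0}

lemma HasLaw.integrable_of_gaussianReal (hX : HasLaw X (gaussianReal μ v) P) : Integrable X P := by
  have h : Integrable id (P.map X) := by
    rw [hX.map_eq]; exact (memLp_id_gaussianReal 1).integrable le_rfl
  exact h.comp_aemeasurable hX.aemeasurable

lemma HasLaw.integral_of_gaussianReal (hX : HasLaw X (gaussianReal μ v) P) : P[X] = μ := by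
  rw [hX.integral_eq, integral_id_gaussianReal]

lemma IndepFun.hasLaw_sub_gaussianReal (hXY : IndepFun X Y P)
    (hX : HasLaw X (gaussianReal μ₁ v₁) P) (hY : HasLaw Y (gaussianReal μ₂ v₂) P) :
    HasLaw (X - Y) (gaussianReal (μ₁ - μ₂) (v₁ + v₂)) P := by
  have hnegY : HasLaw (fun ω ↦ -Y ω) (gaussianReal (-μ₂) v₂) P :=
    HasLaw.fun_comp ⟨by fun_prop, gaussianReal_map_neg⟩ hY
  refine HasLaw.of_map_eq ?_
  rw [sub_eq_add_neg, sub_eq_add_neg]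
  exact gaussianReal_add_gaussianReal_of_indepFun (hXY.comp measurable_id measurable_neg)
    hX.map_eq hnegY.map_eq

lemma IndepFun.integral_abs_sub_gaussianReal (hXY : IndepFun X Y P)
    (hX : HasLaw X (gaussianReal μ v₁) P) (hY : HasLaw Y (gaussianReal μ v₂) P) :
    ∫ ω, |X ω - Y ω| ∂P = √(2 * (v₁ + v₂) / π) := by
  have h := (hXY.hasLaw_sub_gaussianReal hX hY).integral_comp (f := abs) (by fun_prop)
  rw [sub_self, integral_abs_gaussianReal_zero, NNReal.coe_add] at h
  exact h

lemma integral_max_eq_of_integrable (hX : Integrable X P) (hY : Integrable Y P) :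
    ∫ ω, max (X ω) (Y ω) ∂P = (P[X] + P[Y] + ∫ ω, |X ω - Y ω| ∂P) / 2 := by
  simp_rw [max_eq_add_add_abs_sub_div_two]
  rw [integral_div, integral_add (f := fun ω ↦ X ω + Y ω) (g := fun ω ↦ |X ω - Y ω|)
    (hX.add hY) (hX.sub hY).abs, integral_add hX hY]

end ProbabilityTheory

theorem expected_max_two_gaussians
    (Ω : Type) [MeasurableSpace Ω] (P : Measure Ω)
    (μ σ₁ σ₂ : ℝ) (X Y : Ω → ℝ)
    (hX : Measure.map X P = gaussianReal μ (Real.toNNReal (σ₁ ^ 2)))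
    (hY : Measure.map Y P = gaussianReal μ (Real.toNNReal (σ₂ ^ 2)))
    (hindep : IndepFun X Y P) :
    (∫ ω, max (X ω) (Y ω) ∂P) = μ + Real.sqrt ((σ₁ ^ 2 + σ₂ ^ 2) / (2 * Real.pi)) := by
  have hXlaw := HasLaw.of_map_eq hX
  have hYlaw := HasLaw.of_map_eq hY
  rw [integral_max_eq_of_integrable hXlaw.integrable_of_gaussianReal
      hYlaw.integrable_of_gaussianReal, hXlaw.integral_of_gaussianReal,
    hYlaw.integral_of_gaussianReal, hindep.integral_abs_sub_gaussianReal hXlaw hYlaw,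
    Real.coe_toNNReal _ (sq_nonneg σ₁), Real.coe_toNNReal _ (sq_nonneg σ₂),
    show 2 * (σ₁ ^ 2 + σ₂ ^ 2) / π = 2 ^ 2 * ((σ₁ ^ 2 + σ₂ ^ 2) / (2 * π)) by ring,
    sqrt_mul' _ (by positivity), sqrt_sq zero_le_two]
  ring
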